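/- For every n ∈ ℕ with n ≥ 1, every (ξ_j)_{1≤j≤n} ∈ ℝ^n, every (a_j)_{1≤j≤n} ∈ ℂ^n and every (γ_{j,k})_{1≤j<k≤n} ∈ ℝ^{n(n−1)/2}: U_n((ξ_j)_{1≤j≤n}) · M_n((a_j)_{1≤j≤n},(γ_{j,k})_{1≤j<k≤n}) · U_n((ξ_j)_{1≤j≤n})^* = M_n((e^{−iξ_j}·a_j)_{1≤j≤n},(γ_{j,k})_{1≤j<k≤n}), where ^* denotes the conjugate transpose. -/

import Mathlib

open Matrix

/-- The recursively defined unitary matrix `U_n((ξ_j))` (0-based indexing of `B_n = Fin (2^n)`). -/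
noncomputable def Umat : (n : ℕ) → (Fin n → ℝ) → Matrix (Fin (2 ^ n)) (Fin (2 ^ n)) ℂ
  | 0, _ => 1
  | n + 1, ξ =>
      (Matrix.reindex (finSumFinEquiv.trans (finCongr (by rw [pow_succ, mul_two])))
        (finSumFinEquiv.trans (finCongr (by rw [pow_succ, mul_two]))))
        (Matrix.fromBlocks (Umat n fun j => ξ j.castSucc) 0 0
          (Complex.exp (Complex.I * (ξ (Fin.last n) : ℂ)) • Umat n fun j => ξ j.castSucc))

/-- The recursively defined hopping matrix `M_n((a_j), (γ_{j,k}))`; only the entries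
`γ j k` with `j < k` are relevant. -/
noncomputable def Mmat : (n : ℕ) → (Fin n → ℂ) → (Fin n → Fin n → ℝ) →
    Matrix (Fin (2 ^ n)) (Fin (2 ^ n)) ℂ
  | 0, _, _ => 0
  | n + 1, a, γ =>
      (Matrix.reindex (finSumFinEquiv.trans (finCongr (by rw [pow_succ, mul_two])))
        (finSumFinEquiv.trans (finCongr (by rw [pow_succ, mul_two]))))
        (Matrix.fromBlocks
          (Mmat n (fun j => a j.castSucc) fun j k => γ j.castSucc k.castSucc)
          (a (Fin.last n) • Umat n fun j => γ j.castSucc (Fin.last n))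
          ((starRingEnd ℂ) (a (Fin.last n)) • (Umat n fun j => γ j.castSucc (Fin.last n))ᴴ)
          (Mmat n (fun j => a j.castSucc) fun j k => γ j.castSucc k.castSucc))

/-! `ξ ↦ U_n(ξ)` is a homomorphism from `ℝⁿ` to the unitary matrices with commutative image (the
matrices are diagonal), so conjugation by `U_n(ξ)` fixes every `U_n(η)`. Writing
`U_{n+1}(ξ) = diag(U_n, c U_n)` with `c = e^{iξ_{n+1}}`, conjugating the block recursion for
`M_{n+1}` multiplies its upper-right block by `c̄` and its lower-left block by `c`, while the
diagonal blocks (using `|c|² = 1`) become `U_n M_n U_nᴴ`, handled by induction. -/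

section BlockConj

variable {ι α : Type*} [Fintype ι] [CommSemiring α] [StarRing α]

theorem reindex_mul_mul_conjTranspose {κ : Type*} [Fintype κ] (e : ι ≃ κ) (A B C : Matrix ι ι α) :
    reindex e e A * reindex e e B * (reindex e e C)ᴴ = reindex e e (A * B * Cᴴ) := by
  rw [conjTranspose_reindex]
  simp only [← coe_reindexRingEquiv, map_mul]

theorem fromBlocks_smul_diagonal_conj (U A B C D : Matrix ι ι α) (c : α) :
    fromBlocks U 0 0 (c • U) * fromBlocks A B C D * (fromBlocks U 0 0 (c • U))ᴴ =
      fromBlocks (U * A * Uᴴ) (star c • (U * B * Uᴴ)) (c • (U * C * Uᴴ))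
        ((c * star c) • (U * D * Uᴴ)) := by
  simp [fromBlocks_conjTranspose, fromBlocks_multiply, Matrix.smul_mul, Matrix.mul_smul, smul_smul,
    mul_comm]

end BlockConj

theorem Complex.star_exp_I_mul_ofReal (x : ℝ) :
    star (Complex.exp (Complex.I * x)) = Complex.exp (-(Complex.I * x)) := by
  rw [Complex.star_def, ← Complex.exp_conj]
  simp

def finTwoPowSuccEquiv (n : ℕ) : Fin (2 ^ n) ⊕ Fin (2 ^ n) ≃ Fin (2 ^ (n + 1)) :=
  finSumFinEquiv.trans (finCongr (by rw [pow_succ, mul_two]))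

theorem Umat_succ (n : ℕ) (ξ : Fin (n + 1) → ℝ) :
    Umat (n + 1) ξ = reindex (finTwoPowSuccEquiv n) (finTwoPowSuccEquiv n)
      (fromBlocks (Umat n (Fin.init ξ)) 0 0
        (Complex.exp (Complex.I * (ξ (Fin.last n) : ℂ)) • Umat n (Fin.init ξ))) :=
  rfl

theorem Mmat_succ (n : ℕ) (a : Fin (n + 1) → ℂ) (γ : Fin (n + 1) → Fin (n + 1) → ℝ) :
    Mmat (n + 1) a γ = reindex (finTwoPowSuccEquiv n) (finTwoPowSuccEquiv n)
      (fromBlocks (Mmat n (Fin.init a) fun j k => γ j.castSucc k.castSucc)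
        (a (Fin.last n) • Umat n fun j => γ j.castSucc (Fin.last n))
        (star (a (Fin.last n)) • (Umat n fun j => γ j.castSucc (Fin.last n))ᴴ)
        (Mmat n (Fin.init a) fun j k => γ j.castSucc k.castSucc)) :=
  rfl

theorem Umat_add (n : ℕ) (ξ η : Fin n → ℝ) : Umat n (ξ + η) = Umat n ξ * Umat n η := by
  induction n with
  | zero => simp [Umat]
  | succ n ih =>
    rw [Umat_succ, Umat_succ, Umat_succ, show Fin.init (ξ + η) = Fin.init ξ + Fin.init η from rfl,
      ih, reindex_apply, reindex_apply, reindex_apply, submatrix_mul_equiv, fromBlocks_multiply]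
    simp [Complex.exp_add, mul_add, smul_smul, mul_comm]

theorem Umat_conjTranspose (n : ℕ) (ξ : Fin n → ℝ) : (Umat n ξ)ᴴ = Umat n (-ξ) := by
  induction n with
  | zero => simp [Umat]
  | succ n ih =>
    rw [Umat_succ, Umat_succ, conjTranspose_reindex, fromBlocks_conjTranspose, ih,
      show Fin.init (-ξ) = -Fin.init ξ from rfl]
    simp [ih, Complex.star_exp_I_mul_ofReal]

theorem Umat_mul_Umat_mul_conjTranspose (n : ℕ) (ξ η : Fin n → ℝ) :
    Umat n ξ * Umat n η * (Umat n ξ)ᴴ = Umat n η := by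
  rw [Umat_conjTranspose, ← Umat_add, ← Umat_add, add_neg_cancel_comm]

theorem Umat_mul_conjTranspose_mul_conjTranspose (n : ℕ) (ξ η : Fin n → ℝ) :
    Umat n ξ * (Umat n η)ᴴ * (Umat n ξ)ᴴ = (Umat n η)ᴴ := by
  rw [Umat_conjTranspose n η, Umat_mul_Umat_mul_conjTranspose]

theorem Umat_Mmat_conj_general (n : ℕ) (ξ : Fin n → ℝ) (a : Fin n → ℂ)
    (γ : Fin n → Fin n → ℝ) :
    Umat n ξ * Mmat n a γ * (Umat n ξ)ᴴ =
      Mmat n (fun j => Complex.exp (-(Complex.I * (ξ j : ℂ))) * a j) γ := by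
  induction n with
  | zero => simp [Umat, Mmat]
  | succ n ih =>
    set c := Complex.exp (Complex.I * (ξ (Fin.last n) : ℂ))
    have hc : star c = Complex.exp (-(Complex.I * (ξ (Fin.last n) : ℂ))) :=
      Complex.star_exp_I_mul_ofReal _
    have hc_unit : c * star c = 1 := by rw [hc, ← Complex.exp_add, add_neg_cancel, Complex.exp_zero]
    rw [Umat_succ, Mmat_succ, Mmat_succ, reindex_mul_mul_conjTranspose,
      fromBlocks_smul_diagonal_conj]
    congr 2
    · exact ih _ _ _
    · rw [Matrix.mul_smul, Matrix.smul_mul, Umat_mul_Umat_mul_conjTranspose, smul_smul, hc]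
    · rw [Matrix.mul_smul, Matrix.smul_mul, Umat_mul_conjTranspose_mul_conjTranspose, smul_smul,
        star_mul', ← hc, star_star]
    · rw [hc_unit, one_smul]
      exact ih _ _ _

/-- Lemma 2.2 (2): conjugating `M_n` by `U_n` multiplies the hopping parameters by phases. -/
theorem Umat_Mmat_conj (n : ℕ) (hn : 1 ≤ n) (ξ : Fin n → ℝ) (a : Fin n → ℂ)
    (γ : Fin n → Fin n → ℝ) :
    Umat n ξ * Mmat n a γ * (Umat n ξ)ᴴ =
      Mmat n (fun j => Complex.exp (-(Complex.I * (ξ j : ℂ))) * a j) γ :=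
  Umat_Mmat_conj_general n ξ a γ
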